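/- Let T > 0 be fixed. There exists a constant c_T > 0 such that for all a ≥ 1 and all b with |b| ≤ a·e^{-aT}, one has tanh(T·√(a²+b²)) / (√(a²+b²) - a·tanh(T·√(a²+b²))) ≥ c_T · e^{2aT} / a. -/

import Mathlib

private lemma tanh_eq_aux (x : ℝ) :
    Real.tanh x = (Real.exp (2 * x) - 1) / (Real.exp (2 * x) + 1) := by
  have h1 : Real.exp (2 * x) = Real.exp x * Real.exp x := by
    rw [← Real.exp_add]; ring_nf
  have h2 : Real.exp x ≠ 0 := Real.exp_ne_zero x
  have h3 : Real.exp x + Real.exp (-x) > 0 := by positivity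
  have h4 : Real.exp (2 * x) + 1 > 0 := by positivity
  rw [Real.tanh_eq_sinh_div_cosh, Real.sinh_eq, Real.cosh_eq, Real.exp_neg] at *
  field_simp
  rw [h1]; ring

private lemma tanh_lt_one' (x : ℝ) : Real.tanh x < 1 := by
  rw [tanh_eq_aux]
  have h : (0:ℝ) < Real.exp (2 * x) + 1 := by positivity
  rw [div_lt_one h]; linarith

private lemma tanh_mono {x y : ℝ} (h : x ≤ y) : Real.tanh x ≤ Real.tanh y := by
  rw [tanh_eq_aux, tanh_eq_aux]
  have hx : (0:ℝ) < Real.exp (2 * x) + 1 := by positivity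
  have hy : (0:ℝ) < Real.exp (2 * y) + 1 := by positivity
  have he : Real.exp (2 * x) ≤ Real.exp (2 * y) := Real.exp_le_exp.2 (by linarith)
  rw [div_le_div_iff₀ hx hy]; nlinarith

private lemma tanh_pos' {x : ℝ} (h : 0 < x) : 0 < Real.tanh x := by
  rw [tanh_eq_aux]
  have h1 : (1:ℝ) < Real.exp (2 * x) := by
    rw [← Real.exp_zero]; exact Real.exp_lt_exp.2 (by linarith)
  have h2 : (0:ℝ) < Real.exp (2 * x) + 1 := by positivity
  apply div_pos <;> linarith

private lemma one_sub_tanh_le (x : ℝ) : 1 - Real.tanh x ≤ 2 * Real.exp (-(2 * x)) := by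
  rw [tanh_eq_aux, Real.exp_neg]
  have h1 : (0:ℝ) < Real.exp (2 * x) := Real.exp_pos _
  have h2 : (0:ℝ) < Real.exp (2 * x) + 1 := by positivity
  have : 1 - (Real.exp (2 * x) - 1) / (Real.exp (2 * x) + 1)
      = 2 / (Real.exp (2 * x) + 1) := by field_simp; norm_num
  rw [this]
  calc 2 / (Real.exp (2 * x) + 1) ≤ 2 / Real.exp (2 * x) := by gcongr <;> linarith
    _ = 2 * (Real.exp (2 * x))⁻¹ := div_eq_mul_inv _ _

theorem riccati_kappa_lower_bound_small_b (T : ℝ) (hT : 0 < T) :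
    ∃ c : ℝ, 0 < c ∧ ∀ a b : ℝ, 1 ≤ a → |b| ≤ a * Real.exp (-(a * T)) →
      Real.tanh (T * Real.sqrt (a ^ 2 + b ^ 2)) /
          (Real.sqrt (a ^ 2 + b ^ 2) - a * Real.tanh (T * Real.sqrt (a ^ 2 + b ^ 2)))
        ≥ c * Real.exp (2 * a * T) / a := by
  refine ⟨Real.tanh T * (2 / 5), by have := tanh_pos' hT; positivity, ?_⟩
  intro a b ha hb
  set μ := Real.sqrt (a ^ 2 + b ^ 2) with hμdef
  set t := Real.tanh (T * μ) with htdef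
  have ha0 : (0:ℝ) < a := by linarith
  have hμsq : μ ^ 2 = a ^ 2 + b ^ 2 := Real.sq_sqrt (by positivity)
  have hμnn : 0 ≤ μ := Real.sqrt_nonneg _
  have hμa : a ≤ μ := by nlinarith [sq_nonneg b, sq_nonneg (μ - a)]
  -- bound on b^2
  have hb2 : b ^ 2 ≤ a ^ 2 * Real.exp (-(2 * a * T)) := by
    have h1 : b ^ 2 ≤ (a * Real.exp (-(a * T))) ^ 2 := by
      have := abs_nonneg b
      nlinarith [sq_abs b]
    have h2 : (a * Real.exp (-(a * T))) ^ 2 = a ^ 2 * Real.exp (-(2 * a * T)) := by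
      have harg : (-(a * T)) + (-(a * T)) = -(2 * a * T) := by ring
      rw [mul_pow, sq (Real.exp _), ← Real.exp_add, harg]
    linarith [h2 ▸ h1]
  -- μ - a ≤ b^2 / (2a)
  have hμsub : μ - a ≤ b ^ 2 / (2 * a) := by
    rw [le_div_iff₀ (by positivity)]
    nlinarith
  -- tanh bounds
  have htlt : t < 1 := tanh_lt_one' _
  have htpos : 0 < t := tanh_pos' (by nlinarith)
  have htge : Real.tanh T ≤ t := tanh_mono (by nlinarith)
  have h1mt : 1 - t ≤ 2 * Real.exp (-(2 * a * T)) := by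
    have := one_sub_tanh_le (T * μ)
    have he : Real.exp (-(2 * (T * μ))) ≤ Real.exp (-(2 * a * T)) := by
      apply Real.exp_le_exp.2; nlinarith
    linarith
  -- denominator bounds
  have hDpos : 0 < μ - a * t := by nlinarith
  have hDle : μ - a * t ≤ (5 / 2) * a * Real.exp (-(2 * a * T)) := by
    have : μ - a * t = (μ - a) + a * (1 - t) := by ring
    rw [this]
    have h3 : b ^ 2 / (2 * a) ≤ (a / 2) * Real.exp (-(2 * a * T)) := by
      rw [div_le_iff₀ (by positivity)]
      calc b ^ 2 ≤ a ^ 2 * Real.exp (-(2 * a * T)) := hb2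
        _ = a / 2 * Real.exp (-(2 * a * T)) * (2 * a) := by ring
    have h4 : a * (1 - t) ≤ 2 * a * Real.exp (-(2 * a * T)) := by nlinarith
    linarith
  have hchain : Real.tanh T / ((5 / 2) * a * Real.exp (-(2 * a * T))) ≤ t / (μ - a * t) := by
    apply div_le_div₀ (le_of_lt htpos) htge hDpos hDle
  have heq : Real.tanh T / ((5 / 2) * a * Real.exp (-(2 * a * T)))
      = Real.tanh T * (2 / 5) * Real.exp (2 * a * T) / a := by
    rw [Real.exp_neg]
    have hE : Real.exp (2 * a * T) > 0 := Real.exp_pos _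
    field_simp
  rw [ge_iff_le, ← heq]
  exact hchain
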